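/- Let P be a finite poset on [n], λ ∈ ℝ^n_{>0}, and let σ: [n] → [n] be a linear extension of P (a bijection such that j ≺ i in P implies σ^{-1}(j) < σ^{-1}(i)). Let C_k = {σ(1),...,σ(k)} for k = 0,...,n. Then ∫_{{t ∈ ℝ^n : 0 < t_{σ(1)} < t_{σ(2)} < ⋯ < t_{σ(n)}}} ∏_{i=1}^n λ_i exp(−λ_i (t_i − max_{j ∈ pa(i)} t_j)) dt = λ_1 ⋯ λ_n · ∏_{k=0}^{n−1} 1/λ_{Exit(C_k)}. -/

import Mathlib

/-! Substitute the gaps `u k = t (σ k) - t (σ (k - 1))` (with `t (σ (-1)) = 0`): the map `u ↦ t` is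
linear with determinant `±1` and carries the positive orthant onto the cone. Since `σ` is a linear
extension, the last parent of `i` in the order `σ` precedes `i`, so `t i - maxPa P t i` is the sum of
those gaps `u k` with `i ∈ Exit(C_k)`. The exponent of the density thus becomes
`∑ k, λ_{Exit(C_k)} * u k`, and the integral over the orthant factors into `∏ k, 1 / λ_{Exit(C_k)}`.
-/

open MeasureTheory

/-- The maximum of `t` over the strict predecessors of `i` in the poset given by the strict
order relation `P`, with the convention that the maximum over the empty set is `0`. -/
noncomputable def maxPa {n : ℕ} (P : Fin n → Fin n → Prop) (t : Fin n → ℝ) (i : Fin n) : ℝ :=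
  sSup (insert 0 (t '' {j | P j i}))

/-- `S` is an order ideal (lower set) of the strict order `P`. -/
def IsOrderIdeal {n : ℕ} (P : Fin n → Fin n → Prop) (S : Finset (Fin n)) : Prop :=
  ∀ p q : Fin n, P p q → q ∈ S → p ∈ S

open scoped Classical in
/-- `Exit(S)`: the events not in `S` that can occur next. -/
noncomputable def exitSet {n : ℕ} (P : Fin n → Fin n → Prop) (S : Finset (Fin n)) :
    Finset (Fin n) :=
  Finset.univ.filter (fun j => j ∉ S ∧ IsOrderIdeal P (insert j S))

/-- `λ_T = Σ_{j ∈ T} λ_j`. -/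
def rateSum {n : ℕ} (lam : Fin n → ℝ) (T : Finset (Fin n)) : ℝ := ∑ j ∈ T, lam j

/-- `C_k = {σ(1), …, σ(k)}`, the set of the first `k` values of the permutation `σ`. -/
def chainSet {n : ℕ} (σ : Equiv.Perm (Fin n)) (k : ℕ) : Finset (Fin n) :=
  Finset.univ.filter (fun m => ((σ.symm m : ℕ) < k))

open Finset

namespace Matrix

variable {ι : Type*} [Fintype ι] [DecidableEq ι]

lemma measurePreserving_toLin'_of_abs_det_eq_one {M : Matrix ι ι ℝ} (hM : |M.det| = 1) :
    MeasurePreserving (toLin' M) volume volume where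
  measurable := (LinearMap.continuous_on_pi _).measurable
  map_eq := by
    have hM0 : M.det ≠ 0 := fun h => by simp [h] at hM
    rw [Real.map_matrix_volume_pi_eq_smul_volume_pi hM0, abs_inv, hM, inv_one,
      ENNReal.ofReal_one, one_smul]

lemma measurableEmbedding_toLin' {M : Matrix ι ι ℝ} (hM : IsUnit M.det) :
    MeasurableEmbedding (toLin' M) :=
  (toLinearEquiv' M (invertibleOfIsUnitDet M hM)).toContinuousLinearEquiv.toHomeomorph
    |>.measurableEmbedding

end Matrix

variable {n : ℕ}

def cumSumMatrix (σ : Equiv.Perm (Fin n)) : Matrix (Fin n) (Fin n) ℝ :=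
  Matrix.of fun i k => if k ≤ σ.symm i then 1 else 0

lemma toLin'_cumSumMatrix_apply (σ : Equiv.Perm (Fin n)) (u : Fin n → ℝ) (i : Fin n) :
    Matrix.toLin' (cumSumMatrix σ) u i = ∑ k ∈ Iic (σ.symm i), u k := by
  simp [Matrix.mulVec, dotProduct, cumSumMatrix, ite_mul, Finset.sum_ite, Finset.filter_ge_eq_Iic]

lemma abs_det_cumSumMatrix (σ : Equiv.Perm (Fin n)) : |(cumSumMatrix σ).det| = 1 := by
  have hL : (Matrix.of fun a k : Fin n => if k ≤ a then (1 : ℝ) else 0).det = 1 := by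
    rw [Matrix.det_of_isLowerTriangular]
    · simp
    · exact fun i j hij => if_neg (not_le.mpr (OrderDual.toDual_lt_toDual.mp hij))
  have hperm : cumSumMatrix σ =
      (Matrix.of fun a k : Fin n => if k ≤ a then (1 : ℝ) else 0).submatrix σ.symm id := rfl
  rw [hperm, Matrix.det_permute, hL, mul_one, abs_unit_intCast]

def increasingCone (σ : Equiv.Perm (Fin n)) : Set (Fin n → ℝ) :=
  {t | (∀ k, 0 < t (σ k)) ∧ ∀ k l : Fin n, k < l → t (σ k) < t (σ l)}

lemma preimage_increasingCone (σ : Equiv.Perm (Fin n)) :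
    Matrix.toLin' (cumSumMatrix σ) ⁻¹' increasingCone σ = Set.univ.pi fun _ => Set.Ioi 0 := by
  ext u
  simp only [increasingCone, Set.mem_preimage, Set.mem_ofPred_eq, Set.mem_univ_pi, Set.mem_Ioi,
    toLin'_cumSumMatrix_apply, Equiv.symm_apply_apply]
  constructor
  · rintro ⟨hpos, hlt⟩ k
    have hsplit : ∑ j ∈ Iic k, u j = u k + ∑ j ∈ Iio k, u j := by
      rw [← Iio_insert, sum_insert notMem_Iio_self]
    by_cases hk : IsMin k
    · simpa [hk.finsetIio_eq, hsplit] using hpos k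
    · rw [← Iic_pred_eq_Iio_of_not_isMin hk] at hsplit
      linarith [hlt _ _ (Order.pred_lt_of_not_isMin hk)]
  · intro hu
    refine ⟨fun k => sum_pos (fun j _ => hu j) nonempty_Iic, fun k l hkl => ?_⟩
    exact sum_lt_sum_of_subset (Iic_subset_Iic.mpr hkl.le) (mem_Iic.mpr le_rfl)
      (by simpa using hkl) (hu l) fun j _ _ => (hu j).le

section Poset

variable {P : Fin n → Fin n → Prop} {σ : Equiv.Perm (Fin n)}

lemma mem_chainSet {k m : Fin n} : m ∈ chainSet σ k ↔ σ.symm m < k := by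
  simp [chainSet]

lemma mem_exitSet_chainSet_iff (hlin : ∀ i j : Fin n, P j i → σ.symm j < σ.symm i) (k i : Fin n) :
    i ∈ exitSet P (chainSet σ k) ↔ k ≤ σ.symm i ∧ ∀ j, P j i → σ.symm j < k := by
  classical
  rw [exitSet, mem_filter]
  simp only [IsOrderIdeal, mem_univ, true_and, mem_insert, mem_chainSet, not_lt]
  refine and_congr_right fun _ => ⟨fun h j hj => ?_, fun h p q hpq hq => Or.inr ?_⟩
  · rcases h j i hj (Or.inl rfl) with rfl | hj'
    · exact absurd (hlin _ _ hj) (lt_irrefl _)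
    · exact hj'
  · rcases hq with rfl | hq
    exacts [h p hpq, (hlin _ _ hpq).trans hq]

lemma rateSum_exitSet_chainSet_pos (hlin : ∀ i j : Fin n, P j i → σ.symm j < σ.symm i)
    {lam : Fin n → ℝ} (hlam : ∀ i, 0 < lam i) (k : Fin n) :
    0 < rateSum lam (exitSet P (chainSet σ k)) :=
  sum_pos (fun j _ => hlam j) ⟨σ k, (mem_exitSet_chainSet_iff hlin k (σ k)).mpr
    ⟨by simp, fun j hj => by simpa using hlin _ _ hj⟩⟩

lemma maxPa_eq_zero_of_forall_not {t : Fin n → ℝ} {i : Fin n} (h : ∀ j, ¬ P j i) :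
    maxPa P t i = 0 := by
  simp [maxPa, h]

lemma maxPa_eq_of_isGreatest {t : Fin n → ℝ} {i j₀ : Fin n} (hj₀ : P j₀ i)
    (hmax : ∀ j, P j i → t j ≤ t j₀) (h0 : 0 ≤ t j₀) : maxPa P t i = t j₀ :=
  IsGreatest.csSup_eq ⟨Set.mem_insert_of_mem _ ⟨j₀, hj₀, rfl⟩, by
    rintro x (rfl | ⟨j, hj, rfl⟩)
    exacts [h0, hmax j hj]⟩

open scoped Classical in
lemma sub_maxPa_toLin'_cumSumMatrix (hlin : ∀ i j : Fin n, P j i → σ.symm j < σ.symm i)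
    {u : Fin n → ℝ} (hu : ∀ k, 0 ≤ u k) (i : Fin n) :
    Matrix.toLin' (cumSumMatrix σ) u i - maxPa P (Matrix.toLin' (cumSumMatrix σ) u) i =
      ∑ k with k ≤ σ.symm i ∧ ∀ j, P j i → σ.symm j < k, u k := by
  have ht := toLin'_cumSumMatrix_apply σ u
  by_cases hpa : ∃ j, P j i
  · obtain ⟨j₀, hj₀, hmax⟩ := exists_max_image {j | P j i} σ.symm (by simpa [Finset.Nonempty] using hpa)
    simp only [mem_filter, mem_univ, true_and] at hj₀ hmax
    have hsupp : ({k | k ≤ σ.symm i ∧ ∀ j, P j i → σ.symm j < k} : Finset (Fin n)) =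
        Ioc (σ.symm j₀) (σ.symm i) := by
      ext k
      simp only [mem_filter, mem_univ, true_and, mem_Ioc]
      exact ⟨fun h => ⟨h.2 j₀ hj₀, h.1⟩, fun h => ⟨h.2, fun j hj => (hmax j hj).trans_lt h.1⟩⟩
    rw [maxPa_eq_of_isGreatest hj₀ (fun j hj => ?_) (ht j₀ ▸ sum_nonneg fun k _ => hu k), hsupp,
      ht, ht, ← Iic_union_Ioc_eq_Iic (hlin _ _ hj₀).le,
      sum_union (Iic_disjoint_Ioc le_rfl), add_sub_cancel_left]
    rw [ht, ht]
    exact sum_le_sum_of_subset_of_nonneg (Iic_subset_Iic.mpr (hmax j hj)) fun k _ _ => hu k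
  · push Not at hpa
    rw [maxPa_eq_zero_of_forall_not hpa, sub_zero, ht]
    congr 1
    ext k
    simp [hpa]

end Poset

lemma integral_Ioi_exp_neg_mul {c : ℝ} (hc : 0 < c) :
    ∫ x in Set.Ioi (0 : ℝ), Real.exp (-(c * x)) = c⁻¹ := by
  have h := integral_comp_mul_left_Ioi (fun y => Real.exp (-y)) 0 hc
  rw [mul_zero] at h
  rw [h, integral_exp_neg_Ioi_zero, smul_eq_mul, mul_one]

lemma setIntegral_univ_pi_prod {ι : Type*} [Fintype ι] (s : ι → Set ℝ) (f : ι → ℝ → ℝ) :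
    ∫ x in Set.univ.pi s, ∏ i, f i (x i) = ∏ i, ∫ y in s i, f i y := by
  rw [volume_pi, Measure.restrict_pi_pi, integral_fintype_prod_eq_prod]

lemma setIntegral_univ_pi_Ioi_prod_exp_neg_mul {ι : Type*} [Fintype ι] {c : ι → ℝ}
    (hc : ∀ i, 0 < c i) :
    ∫ x in Set.univ.pi fun _ => Set.Ioi 0, ∏ i, Real.exp (-(c i * x i)) = ∏ i, (c i)⁻¹ := by
  rw [setIntegral_univ_pi_prod (fun _ => Set.Ioi 0) fun i y => Real.exp (-(c i * y))]
  exact prod_congr rfl fun i _ => integral_Ioi_exp_neg_mul (hc i)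

section Density

variable {P : Fin n → Fin n → Prop} {σ : Equiv.Perm (Fin n)}

lemma sum_mul_sub_maxPa_toLin'_cumSumMatrix (hlin : ∀ i j : Fin n, P j i → σ.symm j < σ.symm i)
    (lam : Fin n → ℝ) {u : Fin n → ℝ} (hu : ∀ k, 0 ≤ u k) :
    ∑ i, lam i * (Matrix.toLin' (cumSumMatrix σ) u i -
        maxPa P (Matrix.toLin' (cumSumMatrix σ) u) i) =
      ∑ k : Fin n, rateSum lam (exitSet P (chainSet σ k)) * u k := by
  classical
  simp_rw [sub_maxPa_toLin'_cumSumMatrix hlin hu, mul_sum, rateSum, sum_mul]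
  exact sum_comm' fun i k => by simp [mem_exitSet_chainSet_iff hlin]

lemma density_toLin'_cumSumMatrix (hlin : ∀ i j : Fin n, P j i → σ.symm j < σ.symm i)
    (lam : Fin n → ℝ) {u : Fin n → ℝ} (hu : ∀ k, 0 ≤ u k) :
    ∏ i, lam i * Real.exp (-(lam i) * (Matrix.toLin' (cumSumMatrix σ) u i -
        maxPa P (Matrix.toLin' (cumSumMatrix σ) u) i)) =
      (∏ i, lam i) * ∏ k : Fin n, Real.exp (-(rateSum lam (exitSet P (chainSet σ k)) * u k)) := by
  rw [prod_mul_distrib, ← Real.exp_sum, ← Real.exp_sum]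
  simp_rw [neg_mul, sum_neg_distrib, sum_mul_sub_maxPa_toLin'_cumSumMatrix hlin lam hu]

end Density

theorem stmt16_general {n : ℕ} (P : Fin n → Fin n → Prop)
    (lam : Fin n → ℝ) (hlam : ∀ i, 0 < lam i)
    (σ : Equiv.Perm (Fin n))
    (hlin : ∀ i j : Fin n, P j i → σ.symm j < σ.symm i) :
    (∫ t in {t : Fin n → ℝ | (∀ k, 0 < t (σ k)) ∧ ∀ k l : Fin n, k < l → t (σ k) < t (σ l)},
        ∏ i, lam i * Real.exp (-(lam i) * (t i - maxPa P t i))) =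
      (∏ i, lam i) * ∏ k ∈ Finset.range n, (rateSum lam (exitSet P (chainSet σ k)))⁻¹ := by
  have hdet := abs_det_cumSumMatrix σ
  have hunit : IsUnit (cumSumMatrix σ).det := isUnit_iff_ne_zero.mpr fun h => by simp [h] at hdet
  change ∫ t in increasingCone σ, _ = _
  rw [← (Matrix.measurePreserving_toLin'_of_abs_det_eq_one hdet).setIntegral_preimage_emb
      (Matrix.measurableEmbedding_toLin' hunit), preimage_increasingCone,
    setIntegral_congr_fun (MeasurableSet.univ_pi fun _ => measurableSet_Ioi)
      fun u hu => density_toLin'_cumSumMatrix hlin lam fun k => (hu k trivial).le,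
    integral_const_mul, setIntegral_univ_pi_Ioi_prod_exp_neg_mul
      (rateSum_exitSet_chainSet_pos hlin hlam),
    Fin.prod_univ_eq_prod_range fun k => (rateSum lam (exitSet P (chainSet σ k)))⁻¹]

/-- For a linear extension `σ` of the poset `P`, the integral of the CT-CBN density over the
cone `0 < t_{σ(1)} < ⋯ < t_{σ(n)}` equals `λ_1 ⋯ λ_n ∏_{k=0}^{n−1} 1/λ_{Exit(C_k)}` with
`C_k = {σ(1), …, σ(k)}`. -/
theorem stmt16 {n : ℕ} (P : Fin n → Fin n → Prop)
    (hirr : ∀ i, ¬ P i i) (htrans : ∀ i j k, P i j → P j k → P i k)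
    (lam : Fin n → ℝ) (hlam : ∀ i, 0 < lam i)
    (σ : Equiv.Perm (Fin n))
    (hlin : ∀ i j : Fin n, P j i → σ.symm j < σ.symm i) :
    (∫ t in {t : Fin n → ℝ | (∀ k, 0 < t (σ k)) ∧ ∀ k l : Fin n, k < l → t (σ k) < t (σ l)},
        ∏ i, lam i * Real.exp (-(lam i) * (t i - maxPa P t i))) =
      (∏ i, lam i) * ∏ k ∈ Finset.range n, (rateSum lam (exitSet P (chainSet σ k)))⁻¹ :=
  stmt16_general P lam hlam σ hlin
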